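/- arXiv:1601.00399 — 2 statements merged into one kernel-verified Lean document; each statement's English description precedes it below -/
import Mathlib

section
/- Marginals from the MRA decomposition: Let A ⊆ [n] with |A| ≥ 2, F ∈ L(Γ(A)), and suppose F = Σ_{B∈P̄(A)} φ_A X_B with X_B ∈ H_B for each B ∈ P̄(A). Then for every A' ⊆ A with |A'| ≥ 2, the marginal satisfies M_{A'}F = Σ_{B∈P̄(A')} φ_{A'} X_B. -/
open Finset
open scoped List

abbrev Word (n : ℕ) := List (Fin n)

/-- `Γ(A)`: duplicate-free words whose set of letters is exactly `A`. -/
noncomputable def rankings (n : ℕ) (A : Finset (Fin n)) : Finset (Word n) :=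
  A.toList.permutations.toFinset

/-- All duplicate-free words on `[n]`. -/
noncomputable def allWords (n : ℕ) : Finset (Word n) :=
  Finset.univ.biUnion fun A : Finset (Fin n) => rankings n A

def IsRanking {n : ℕ} (A : Finset (Fin n)) (w : Word n) : Prop :=
  w.Nodup ∧ w.toFinset = A

instance {n : ℕ} (A : Finset (Fin n)) (w : Word n) : Decidable (IsRanking A w) :=
  inferInstanceAs (Decidable (w.Nodup ∧ w.toFinset = A))

/-- Membership in `L(Γ(A))`: functions supported on `Γ(A)`. -/
def MemL {n : ℕ} (A : Finset (Fin n)) (F : Word n → ℝ) : Prop :=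
  ∀ w, F w ≠ 0 → IsRanking A w

/-- Marginal operator `M_B` (with the convention `M_∅ F = (Σ F)·δ_0̄`). -/
noncomputable def marg {n : ℕ} (B : Finset (Fin n)) (F : Word n → ℝ) : Word n → ℝ :=
  fun π => if IsRanking B π then ∑ σ ∈ allWords n, (if π <+ σ then F σ else 0) else 0

/-- Membership in the localization space `H_B` (for `B = ∅` this is `L(Γ(∅)) = ℝ·δ_0̄`). -/
def MemH {n : ℕ} (B : Finset (Fin n)) (F : Word n → ℝ) : Prop :=
  MemL B F ∧
    (∀ B' : Finset (Fin n), B' ⊂ B → 2 ≤ B'.card → marg B' F = 0) ∧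
    (2 ≤ B.card → ∑ π ∈ rankings n B, F π = 0)

/-- `P̄(A) = {B ⊆ A : |B| ≥ 2} ∪ {∅}`. -/
def Pbar {n : ℕ} (A : Finset (Fin n)) : Finset (Finset (Fin n)) :=
  A.powerset.filter fun B => 2 ≤ B.card ∨ B = ∅

/-- Synthesis operator `φ_A`. -/
noncomputable def synth {n : ℕ} (A : Finset (Fin n)) (F : Word n → ℝ) : Word n → ℝ :=
  fun σ =>
    if IsRanking A σ then
      F [] / (Nat.factorial A.card : ℝ) +
        ∑ π ∈ allWords n,
          (if π ≠ [] ∧ π <:+: σ then F π / (Nat.factorial (A.card - π.length + 1) : ℝ) else 0)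
    else 0

/-- Dirac function `δ_π`. -/
noncomputable def dirac {n : ℕ} (π : Word n) : Word n → ℝ :=
  fun w => if w = π then 1 else 0

/-- `σ|_C`: the induced word of `σ` on `C`. -/
def restrictWord {n : ℕ} (σ : Word n) (C : Finset (Fin n)) : Word n :=
  σ.filter fun a => decide (a ∈ C)

/-!
Marginalization is transitive on `L(Γ(A))`, so it suffices to marginalize out one item `a ∉ A'`
at a time, i.e. to compute `M_{A'} φ_{A' ∪ {a}} X_B`. The rankings of `A' ∪ {a}` above
`π ∈ Γ(A')` are the `|π| + 1` insertions of `a` into `π`; for `B = ∅` this gives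
`(|A'| + 1) / (|A'| + 1)! = 1 / |A'|!`. If `a ∉ B`, an infix `τ` of `π` stays an infix of exactly
`|π| + 2 - |τ|` insertions (and no new infix of content `B` appears), and
`(k + 2) / (k + 2)! = 1 / (k + 1)!` turns `φ_{A' ∪ {a}}` into `φ_{A'}`. If `a ∈ B`, `τ` is an infix
of exactly one insertion when `τ` with `a` deleted is an infix of `π`, and of none otherwise;
grouping the `τ` by that deletion produces the marginal `M_{B ∖ {a}} X_B`, which vanishes because
`X_B ∈ H_B` (when `|B| = 2` it is the total sum of `X_B` that vanishes instead).
-/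

open scoped Nat

namespace List

variable {α : Type*}

theorem Nodup.notMem_of_append_cons {u v : List α} {a : α} (h : (u ++ a :: v).Nodup) :
    a ∉ u ++ v :=
  (nodup_cons.1 (nodup_middle.1 h)).1

theorem insertIdx_eq_take_append_cons_drop {l : List α} {i : ℕ} (hi : i ≤ l.length) (a : α) :
    l.insertIdx i a = l.take i ++ a :: l.drop i := by
  obtain ⟨l₁, l₂, rfl, rfl, h⟩ := exists_of_modifyTailIdx (cons a) hi
  simpa [insertIdx] using h

theorem Nodup.insertIdx {l : List α} {a : α} (hl : l.Nodup) (ha : a ∉ l) {i : ℕ}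
    (hi : i ≤ l.length) : (l.insertIdx i a).Nodup :=
  (perm_insertIdx a l hi).nodup_iff.2 (nodup_cons.2 ⟨ha, hl⟩)

theorem Nodup.append_cons_inj {u v p q : List α} {a : α} (hnd : (u ++ a :: v).Nodup)
    (h : u ++ a :: v = p ++ a :: q) : u = p ∧ v = q := by
  have ha := hnd.notMem_of_append_cons
  obtain ⟨hu, -, hv⟩ := (append_cons_inj_of_notMem (fun h' => ha (mem_append_left v h'))
    (fun h' => ha (mem_append_right u h'))).1 h
  exact ⟨hu, hv⟩

theorem Nodup.infix_decomposition_unique {l τ s t s' t' : List α} (hnd : l.Nodup) (hτ : τ ≠ [])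
    (h : l = s ++ (τ ++ t)) (h' : l = s' ++ (τ ++ t')) : s = s' ∧ t = t' := by
  obtain ⟨b, τ, rfl⟩ := exists_cons_of_ne_nil hτ
  simp only [cons_append] at h h'
  obtain ⟨rfl, ht⟩ := (h ▸ hnd).append_cons_inj (h.symm.trans h')
  exact ⟨rfl, append_cancel_left ht⟩

theorem Nodup.infix_take_iff {l τ s t : List α} (hnd : l.Nodup) (hτ : τ ≠ [])
    (hl : l = s ++ (τ ++ t)) {j : ℕ} (hj : j ≤ l.length) :
    τ <:+: l.take j ↔ s.length + τ.length ≤ j := by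
  constructor
  · rintro ⟨s₁, t₁, h⟩
    have hl₁ : l = s₁ ++ (τ ++ (t₁ ++ l.drop j)) := by
      conv_lhs => rw [← take_append_drop j l, ← h]
      simp
    obtain ⟨rfl, -⟩ := hnd.infix_decomposition_unique hτ hl₁ hl
    have := congrArg length h
    simp only [length_append, length_take, Nat.min_eq_left hj] at this
    omega
  · intro h
    refine ⟨s, t.take (j - (s.length + τ.length)), ?_⟩
    have hlen : (s ++ τ).length ≤ j := by simpa using h
    rw [hl, ← append_assoc, take_append, take_of_length_le hlen, length_append]

theorem Nodup.infix_drop_iff {l τ s t : List α} (hnd : l.Nodup) (hτ : τ ≠ [])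
    (hl : l = s ++ (τ ++ t)) {j : ℕ} (hj : j ≤ l.length) :
    τ <:+: l.drop j ↔ j ≤ s.length := by
  constructor
  · rintro ⟨s₁, t₁, h⟩
    have hl₁ : l = (l.take j ++ s₁) ++ (τ ++ t₁) := by
      conv_lhs => rw [← take_append_drop j l, ← h]
      simp
    obtain ⟨hs, -⟩ := hnd.infix_decomposition_unique hτ hl₁ hl
    have := congrArg length hs
    simp only [length_append, length_take, Nat.min_eq_left hj] at this
    omega
  · intro h
    refine ⟨s.drop j, t, ?_⟩
    rw [hl, drop_append, Nat.sub_eq_zero_of_le h, drop_zero, append_assoc]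

theorem Nodup.infix_append_cons_iff {u v τ : List α} {a : α} (hnd : (u ++ a :: v).Nodup)
    (ha : a ∉ τ) : τ <:+: u ++ a :: v ↔ τ <:+: u ∨ τ <:+: v := by
  constructor
  · rintro ⟨s, t, h⟩
    have hmem : a ∈ s ++ τ ++ t := by rw [h]; simp
    rcases mem_append.1 hmem with hs | ht
    · obtain ⟨p, q, rfl⟩ := append_of_mem (mem_append.1 hs |>.resolve_right ha)
      have h' : p ++ a :: (q ++ (τ ++ t)) = u ++ a :: v := by rw [← h]; simp
      obtain ⟨-, hv⟩ := (h' ▸ hnd).append_cons_inj h'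
      exact Or.inr ⟨q, t, by rw [append_assoc, hv]⟩
    · obtain ⟨p, q, rfl⟩ := append_of_mem ht
      have h' : (s ++ (τ ++ p)) ++ a :: q = u ++ a :: v := by rw [← h]; simp
      obtain ⟨hu, -⟩ := (h' ▸ hnd).append_cons_inj h'
      exact Or.inl ⟨s, p, by rw [append_assoc, hu]⟩
  · rintro (⟨s, t, h⟩ | ⟨s, t, h⟩)
    · exact ⟨s, t ++ a :: v, by rw [← h]; simp⟩
    · exact ⟨u ++ a :: s, t, by rw [← h]; simp⟩

theorem Nodup.append_cons_infix_append_cons_iff {u v p q : List α} {a : α}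
    (hnd : (u ++ a :: v).Nodup) : p ++ a :: q <:+: u ++ a :: v ↔ p <:+ u ∧ q <+: v := by
  constructor
  · rintro ⟨s, t, h⟩
    have h' : (s ++ p) ++ a :: (q ++ t) = u ++ a :: v := by rw [← h]; simp
    obtain ⟨hu, hv⟩ := (h' ▸ hnd).append_cons_inj h'
    exact ⟨⟨s, hu⟩, ⟨t, hv⟩⟩
  · rintro ⟨⟨s, rfl⟩, ⟨t, rfl⟩⟩
    exact ⟨s, t, by simp⟩

theorem Nodup.infix_insertIdx_iff_of_notMem {l τ : List α} {a : α} (hl : l.Nodup) (ha : a ∉ l)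
    (haτ : a ∉ τ) {j : ℕ} (hj : j ≤ l.length) :
    τ <:+: l.insertIdx j a ↔ τ <:+: l.take j ∨ τ <:+: l.drop j := by
  have hnd := hl.insertIdx ha hj
  rw [insertIdx_eq_take_append_cons_drop hj] at hnd ⊢
  exact hnd.infix_append_cons_iff haτ

theorem Nodup.append_cons_infix_insertIdx_iff {l p q : List α} {a : α} (hl : l.Nodup)
    (ha : a ∉ l) {j : ℕ} (hj : j ≤ l.length) :
    p ++ a :: q <:+: l.insertIdx j a ↔ p <:+ l.take j ∧ q <+: l.drop j := by
  have hnd := hl.insertIdx ha hj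
  rw [insertIdx_eq_take_append_cons_drop hj] at hnd ⊢
  exact hnd.append_cons_infix_append_cons_iff

theorem infix_of_suffix_take_of_prefix_drop {l p q : List α} {j : ℕ} (hp : p <:+ l.take j)
    (hq : q <+: l.drop j) : p ++ q <:+: l := by
  obtain ⟨s, hs⟩ := hp
  obtain ⟨t, ht⟩ := hq
  exact ⟨s, t, by rw [← take_append_drop j l, ← hs, ← ht]; simp⟩

theorem Nodup.suffix_take_and_prefix_drop_iff {l p q s t : List α} (hl : l.Nodup)
    (hpq : p ++ q ≠ []) (hdec : l = s ++ (p ++ q ++ t)) {j : ℕ} (hj : j ≤ l.length) :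
    p <:+ l.take j ∧ q <+: l.drop j ↔ j = s.length + p.length := by
  constructor
  · rintro ⟨⟨s₁, h₁⟩, ⟨t₁, h₂⟩⟩
    have hdec₁ : l = s₁ ++ (p ++ q ++ t₁) := by
      conv_lhs => rw [← take_append_drop j l, ← h₁, ← h₂]
      simp
    obtain ⟨rfl, -⟩ := hl.infix_decomposition_unique hpq hdec₁ hdec
    have := congrArg length h₁
    simp only [length_append, length_take, Nat.min_eq_left hj] at this
    omega
  · rintro rfl
    have hdec' : l = (s ++ p) ++ (q ++ t) := by simp [hdec]
    exact ⟨⟨s, by rw [hdec', ← length_append, take_left]⟩,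
      ⟨t, by rw [hdec', ← length_append, drop_left]⟩⟩

variable [DecidableEq α]

theorem Nodup.exists_insertIdx_of_sublist {π σ : List α} {a : α} (hσ : σ.Nodup) (ha : a ∉ π)
    (haσ : a ∈ σ) (hlen : σ.length = π.length + 1) (hsub : π <+ σ) :
    ∃ j ≤ π.length, σ = π.insertIdx j a := by
  obtain ⟨u, v, rfl⟩ := append_of_mem haσ
  have hu : a ∉ u := fun h => hσ.notMem_of_append_cons (mem_append_left v h)
  have hsub' : π <+ u ++ v := by
    simpa [erase_of_not_mem ha, erase_append_right _ hu] using hsub.erase a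
  have hπ : π = u ++ v := hsub'.eq_of_length (by simp at hlen ⊢; omega)
  subst hπ
  refine ⟨u.length, by simp, ?_⟩
  rw [insertIdx_eq_take_append_cons_drop (by simp), take_left, drop_left]

end List

section InsertionCount

variable {α : Type*} [DecidableEq α]

theorem card_filter_infix_insertIdx_of_notMem {π τ : List α} {a : α} (hπ : π.Nodup)
    (ha : a ∉ π) (hτ : τ ≠ []) (haτ : a ∉ τ) :
    #{j ∈ range (π.length + 1) | τ <:+: π.insertIdx j a}
      = if τ <:+: π then π.length + 2 - τ.length else 0 := by
  split_ifs with h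
  · obtain ⟨s, t, hst⟩ := h
    have hdec : π = s ++ (τ ++ t) := by rw [← hst, List.append_assoc]
    have hlen : s.length + τ.length + t.length = π.length := by simp [hdec]; omega
    have hfilter : {j ∈ range (π.length + 1) | τ <:+: π.insertIdx j a}
        = range (π.length + 1) \ Ico (s.length + 1) (s.length + τ.length) := by
      ext j
      simp only [mem_filter, Finset.mem_sdiff, Finset.mem_Ico, Finset.mem_range]
      refine and_congr_right fun hj => ?_
      rw [hπ.infix_insertIdx_iff_of_notMem ha haτ (by omega), hπ.infix_take_iff hτ hdec (by omega),
        hπ.infix_drop_iff hτ hdec (by omega)]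
      omega
    have hτ1 : 1 ≤ τ.length := List.length_pos_iff.2 hτ
    rw [hfilter, card_sdiff_of_subset (fun j hj => by simp at hj ⊢; omega), card_range,
      Nat.card_Ico]
    omega
  · refine card_eq_zero.2 (filter_eq_empty_iff.2 fun j hj hinf => h ?_)
    rcases (hπ.infix_insertIdx_iff_of_notMem ha haτ (by simp at hj; omega)).1 hinf with hinf | hinf
    · exact hinf.trans (List.take_prefix j π).isInfix
    · exact hinf.trans (List.drop_suffix j π).isInfix

theorem card_filter_infix_insertIdx_of_mem {π τ : List α} {a : α} (hπ : π.Nodup) (ha : a ∉ π)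
    (hτ : τ.Nodup) (haτ : a ∈ τ) (hτa : τ.erase a ≠ []) :
    #{j ∈ range (π.length + 1) | τ <:+: π.insertIdx j a}
      = if τ.erase a <:+: π then 1 else 0 := by
  obtain ⟨p, q, rfl⟩ := List.append_of_mem haτ
  have hp : a ∉ p := fun h => hτ.notMem_of_append_cons (List.mem_append_left q h)
  rw [List.erase_append_right _ hp, List.erase_cons_head] at hτa ⊢
  split_ifs with h
  · obtain ⟨s, t, hst⟩ := h
    have hdec : π = s ++ (p ++ q ++ t) := by rw [← hst, List.append_assoc]
    have hpos : s.length + p.length ≤ π.length := by simp [hdec]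
    refine card_eq_one.2 ⟨s.length + p.length, ext fun j => ?_⟩
    simp only [mem_filter, Finset.mem_range, Finset.mem_singleton]
    constructor
    · rintro ⟨hj, hinf⟩
      exact (hπ.suffix_take_and_prefix_drop_iff hτa hdec (by omega)).1
        ((hπ.append_cons_infix_insertIdx_iff ha (by omega)).1 hinf)
    · rintro rfl
      exact ⟨by omega, (hπ.append_cons_infix_insertIdx_iff ha hpos).2
        ((hπ.suffix_take_and_prefix_drop_iff hτa hdec hpos).2 rfl)⟩
  · refine card_eq_zero.2 (filter_eq_empty_iff.2 fun j hj hinf => h ?_)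
    obtain ⟨hp, hq⟩ := (hπ.append_cons_infix_insertIdx_iff ha (by simp at hj; omega)).1 hinf
    exact List.infix_of_suffix_take_of_prefix_drop hp hq

end InsertionCount

section Rankings

variable {n : ℕ} {A B : Finset (Fin n)}

theorem mem_rankings {w : Word n} : w ∈ rankings n A ↔ IsRanking A w := by
  simp only [rankings, List.mem_toFinset, List.mem_permutations, IsRanking]
  constructor
  · intro h
    exact ⟨h.nodup_iff.2 A.nodup_toList, by ext; simp [h.mem_iff]⟩
  · rintro ⟨hnd, rfl⟩
    exact (List.perm_ext_iff_of_nodup hnd (Finset.nodup_toList _)).2 fun x => by simp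

theorem mem_allWords {w : Word n} : w ∈ allWords n ↔ w.Nodup := by
  simp only [allWords, mem_biUnion, mem_univ, true_and, mem_rankings]
  exact ⟨fun ⟨_, h⟩ => h.1, fun h => ⟨w.toFinset, h, rfl⟩⟩

theorem IsRanking.length_eq {w : Word n} (h : IsRanking A w) : w.length = A.card := by
  rw [← h.2, List.toFinset_card_of_nodup h.1]

theorem IsRanking.ne_nil {w : Word n} (h : IsRanking A w) (hA : A.Nonempty) : w ≠ [] := by
  rintro rfl
  simp [← h.2] at hA

theorem IsRanking.notMem {w : Word n} (h : IsRanking A w) {a : Fin n} (ha : a ∉ A) : a ∉ w :=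
  fun haw => ha (h.2 ▸ List.mem_toFinset.2 haw)

theorem isRanking_singleton_iff {b : Fin n} {w : Word n} : IsRanking {b} w ↔ w = [b] := by
  refine ⟨fun h => ?_, fun h => ⟨h ▸ List.nodup_singleton b, by simp [h]⟩⟩
  obtain ⟨c, rfl⟩ := List.length_eq_one_iff.1 (h.length_eq.trans (card_singleton b))
  simpa using h.2

theorem IsRanking.erase {w : Word n} (h : IsRanking A w) (a : Fin n) :
    IsRanking (A.erase a) (w.erase a) := by
  refine ⟨h.1.erase a, ?_⟩
  ext x
  rw [List.mem_toFinset, h.1.mem_erase_iff, Finset.mem_erase, ← h.2, List.mem_toFinset]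

theorem IsRanking.insertIdx {w : Word n} (h : IsRanking A w) {a : Fin n} (ha : a ∉ A) {j : ℕ}
    (hj : j ≤ w.length) : IsRanking (insert a A) (w.insertIdx j a) := by
  refine ⟨h.1.insertIdx (h.notMem ha) hj, ?_⟩
  ext x
  simp [(List.perm_insertIdx a w hj).mem_iff, ← h.2]

theorem restrictWord_sublist (σ : Word n) (B : Finset (Fin n)) : restrictWord σ B <+ σ :=
  List.filter_sublist

theorem IsRanking.restrict {σ : Word n} (hσ : IsRanking A σ) (hB : B ⊆ A) :
    IsRanking B (restrictWord σ B) := by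
  refine ⟨hσ.1.filter _, ?_⟩
  ext x
  simp only [restrictWord, List.mem_toFinset, List.mem_filter, decide_eq_true_eq,
    and_iff_right_iff_imp]
  exact fun hx => List.mem_toFinset.1 (hσ.2 ▸ hB hx)

theorem IsRanking.sublist_restrictWord_iff {π : Word n} (hπ : IsRanking A π) (hAB : A ⊆ B)
    {σ : Word n} : π <+ restrictWord σ B ↔ π <+ σ := by
  refine ⟨fun h => h.trans (restrictWord_sublist σ B), fun h => ?_⟩
  unfold restrictWord
  have hπB : π.filter (· ∈ B) = π :=
    List.filter_eq_self.2 fun b hb => by simpa using hAB (hπ.2 ▸ List.mem_toFinset.2 hb)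
  exact hπB ▸ h.filter _

theorem IsRanking.eq_restrictWord_of_sublist {σ ρ : Word n} (hσ : IsRanking A σ) (hB : B ⊆ A)
    (hρ : IsRanking B ρ) (hsub : ρ <+ σ) : ρ = restrictWord σ B :=
  ((hρ.sublist_restrictWord_iff subset_rfl).2 hsub).eq_of_length
    (by rw [hρ.length_eq, (hσ.restrict hB).length_eq])

theorem sum_allWords_eq_sum_rankings {f : Word n → ℝ} (hf : ∀ w, f w ≠ 0 → IsRanking A w) :
    ∑ w ∈ allWords n, f w = ∑ w ∈ rankings n A, f w := by
  refine (sum_subset (fun w hw => mem_allWords.2 (mem_rankings.1 hw).1) fun w _ hw => ?_).symm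
  by_contra h
  exact hw (mem_rankings.2 (hf w h))

theorem sum_sublist_rankings_insert {a : Fin n} (ha : a ∉ A) {π : Word n} (hπ : IsRanking A π)
    (f : Word n → ℝ) :
    ∑ σ ∈ rankings n (insert a A), (if π <+ σ then f σ else 0)
      = ∑ j ∈ range (π.length + 1), f (π.insertIdx j a) := by
  have hsupers : {σ ∈ rankings n (insert a A) | π <+ σ}
      = (range (π.length + 1)).image (π.insertIdx · a) := by
    ext σ
    simp only [mem_filter, mem_image, mem_range, mem_rankings, Nat.lt_succ_iff]
    constructor
    · rintro ⟨hσ, hsub⟩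
      obtain ⟨j, hj, rfl⟩ := hσ.1.exists_insertIdx_of_sublist (hπ.notMem ha)
        (List.mem_toFinset.1 (hσ.2 ▸ mem_insert_self a A))
        (by rw [hσ.length_eq, hπ.length_eq, card_insert_of_notMem ha]) hsub
      exact ⟨j, hj, rfl⟩
    · rintro ⟨j, hj, rfl⟩
      exact ⟨hπ.insertIdx ha hj, List.sublist_insertIdx π j a⟩
  rw [← sum_filter, hsupers, sum_image]
  exact fun i hi j hj => List.injOn_insertIdx_index_of_notMem π a (hπ.notMem ha)
    (Nat.lt_succ_iff.1 (mem_range.1 hi)) (Nat.lt_succ_iff.1 (mem_range.1 hj))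

end Rankings

section Marginals

variable {n : ℕ} {A B : Finset (Fin n)}

theorem memL_marg (B : Finset (Fin n)) (F : Word n → ℝ) : MemL B (marg B F) := by
  intro w hw
  by_contra h
  simp [marg, h] at hw

theorem memL_synth (A : Finset (Fin n)) (F : Word n → ℝ) : MemL A (synth A F) := by
  intro w hw
  by_contra h
  simp [synth, h] at hw

theorem memL_sum {ι : Type*} {s : Finset ι} {F : ι → Word n → ℝ} (h : ∀ i ∈ s, MemL A (F i)) :
    MemL A (∑ i ∈ s, F i) := by
  intro w hw
  by_contra hw'
  rw [Finset.sum_apply, sum_eq_zero fun i hi => not_imp_comm.1 (h i hi w) hw'] at hw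
  exact hw rfl

theorem MemL.ext {F G : Word n → ℝ} (hF : MemL A F) (hG : MemL A G)
    (h : ∀ π, IsRanking A π → F π = G π) : F = G := by
  funext π
  by_cases hπ : IsRanking A π
  · exact h π hπ
  · rw [not_imp_comm.1 (hF π) hπ, not_imp_comm.1 (hG π) hπ]

theorem marg_apply_of_memL {F : Word n → ℝ} (hF : MemL A F) {π : Word n} (hπ : IsRanking B π) :
    marg B F π = ∑ σ ∈ rankings n A, (if π <+ σ then F σ else 0) := by
  rw [marg, if_pos hπ]
  refine sum_allWords_eq_sum_rankings fun w hw => hF w fun h0 => ?_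
  simp [h0] at hw

theorem marg_eq_self {F : Word n → ℝ} (hF : MemL A F) : marg A F = F := by
  refine (memL_marg A F).ext hF fun π hπ => ?_
  rw [marg_apply_of_memL hF hπ, sum_eq_single_of_mem π (mem_rankings.2 hπ), if_pos (.refl π)]
  intro σ hσ hσπ
  refine if_neg fun hsub => hσπ (hsub.eq_of_length ?_).symm
  rw [hπ.length_eq, (mem_rankings.1 hσ).length_eq]

theorem marg_sum {ι : Type*} {s : Finset ι} {F : ι → Word n → ℝ} :
    marg B (∑ i ∈ s, F i) = ∑ i ∈ s, marg B (F i) := by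
  funext π
  simp only [marg, Finset.sum_apply]
  split_ifs
  · rw [sum_comm]
    exact sum_congr rfl fun σ _ => by split_ifs <;> simp
  · simp

theorem marg_marg {A' A'' : Finset (Fin n)} (h₁ : A'' ⊆ A') (h₂ : A' ⊆ A) {F : Word n → ℝ}
    (hF : MemL A F) : marg A'' (marg A' F) = marg A'' F := by
  refine (memL_marg A'' _).ext (memL_marg A'' F) fun π hπ => ?_
  rw [marg_apply_of_memL (memL_marg A' F) hπ, marg_apply_of_memL hF hπ]
  have hexpand : ∀ ρ ∈ rankings n A', (if π <+ ρ then marg A' F ρ else 0)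
      = ∑ σ ∈ rankings n A, (if π <+ ρ ∧ ρ <+ σ then F σ else 0) := by
    intro ρ hρ
    rw [marg_apply_of_memL hF (mem_rankings.1 hρ)]
    split_ifs with hπρ
    · exact sum_congr rfl fun σ _ => by simp [hπρ]
    · simp [hπρ]
  rw [sum_congr rfl hexpand, sum_comm]
  refine sum_congr rfl fun σ hσ => ?_
  have hσ := mem_rankings.1 hσ
  rw [sum_eq_single_of_mem (restrictWord σ A') (mem_rankings.2 (hσ.restrict h₂))]
  · simp only [hπ.sublist_restrictWord_iff h₁, restrictWord_sublist, and_true]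
  · intro ρ hρ hne
    exact if_neg fun ⟨_, hsub⟩ => hne (hσ.eq_restrictWord_of_sublist h₂ (mem_rankings.1 hρ) hsub)

end Marginals

section Synthesis

variable {n : ℕ} {A B : Finset (Fin n)} {X : Word n → ℝ}

theorem synth_apply_of_nonempty (hB : B.Nonempty) (hX : MemL B X) {σ : Word n}
    (hσ : IsRanking A σ) :
    synth A X σ = ∑ τ ∈ rankings n B,
      (if τ <:+: σ then X τ / (A.card - B.card + 1)! else 0) := by
  have hX₀ : X [] = 0 := not_imp_comm.1 (hX []) fun h => h.ne_nil hB rfl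
  rw [synth, if_pos hσ, hX₀, zero_div, zero_add]
  rw [sum_allWords_eq_sum_rankings (A := B) fun w hw => hX w fun h0 => by simp [h0] at hw]
  refine sum_congr rfl fun τ hτ => ?_
  have hτ := mem_rankings.1 hτ
  simp only [ne_eq, hτ.ne_nil hB, not_false_eq_true, true_and, hτ.length_eq]

theorem synth_apply_of_memL_empty (hX : MemL ∅ X) {σ : Word n} (hσ : IsRanking A σ) :
    synth A X σ = X [] / A.card ! := by
  rw [synth, if_pos hσ, sum_eq_zero, add_zero]
  intro τ _
  refine ite_eq_right_iff.2 fun ⟨hτ, _⟩ => ?_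
  rw [not_imp_comm.1 (hX τ) fun h => hτ ((List.toFinset_eq_empty_iff τ).1 h.2), zero_div]

theorem marg_synth_insert_apply {a : Fin n} (ha : a ∉ A) {π : Word n} (hπ : IsRanking A π) :
    marg A (synth (insert a A) X) π
      = ∑ j ∈ range (π.length + 1), synth (insert a A) X (π.insertIdx j a) := by
  rw [marg_apply_of_memL (memL_synth _ X) hπ, sum_sublist_rankings_insert ha hπ]

theorem marg_synth_insert_of_memL_empty {a : Fin n} (ha : a ∉ A) (hX : MemL ∅ X) :
    marg A (synth (insert a A) X) = synth A X := by
  refine (memL_marg A _).ext (memL_synth A X) fun π hπ => ?_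
  rw [marg_synth_insert_apply ha hπ,
    sum_congr rfl fun j hj => synth_apply_of_memL_empty hX
      (hπ.insertIdx ha (mem_range_succ_iff.1 hj)),
    sum_const, card_range, synth_apply_of_memL_empty hX hπ, card_insert_of_notMem ha,
    hπ.length_eq, Nat.factorial_succ, nsmul_eq_mul]
  push_cast
  field_simp

theorem marg_synth_insert_apply_of_nonempty {a : Fin n} (ha : a ∉ A) (hB : B.Nonempty)
    (hX : MemL B X) {π : Word n} (hπ : IsRanking A π) :
    marg A (synth (insert a A) X) π = ∑ τ ∈ rankings n B,
      #{j ∈ range (π.length + 1) | τ <:+: π.insertIdx j a}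
        * (X τ / ((insert a A).card - B.card + 1)!) := by
  rw [marg_synth_insert_apply ha hπ,
    sum_congr rfl fun j hj => synth_apply_of_nonempty hB hX
      (hπ.insertIdx ha (mem_range_succ_iff.1 hj)), sum_comm]
  exact sum_congr rfl fun τ _ => by rw [← sum_filter, sum_const, nsmul_eq_mul]

theorem marg_synth_insert_of_notMem {a : Fin n} (ha : a ∉ A) (hB : B.Nonempty) (haB : a ∉ B)
    (hX : MemL B X) : marg A (synth (insert a A) X) = synth A X := by
  refine (memL_marg A _).ext (memL_synth A X) fun π hπ => ?_
  rw [marg_synth_insert_apply_of_nonempty ha hB hX hπ, synth_apply_of_nonempty hB hX hπ]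
  refine sum_congr rfl fun τ hτ => ?_
  have hτ := mem_rankings.1 hτ
  rw [card_filter_infix_insertIdx_of_notMem hπ.1 (hπ.notMem ha) (hτ.ne_nil hB) (hτ.notMem haB),
    card_insert_of_notMem ha]
  split_ifs with hτπ
  · obtain ⟨k, hk⟩ : ∃ k, A.card = B.card + k :=
      Nat.exists_eq_add_of_le (hτ.length_eq ▸ hπ.length_eq ▸ hτπ.length_le)
    rw [hπ.length_eq, hτ.length_eq, hk, show B.card + k + 2 - B.card = k + 2 by omega,
      show B.card + k + 1 - B.card + 1 = k + 2 by omega,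
      show B.card + k - B.card + 1 = k + 1 by omega, Nat.factorial_succ (k + 1)]
    push_cast
    field_simp
    ring
  · simp

theorem sum_rankings_erase_eq_marg (hX : MemL B X) {a : Fin n} {ρ : Word n}
    (hρ : IsRanking (B.erase a) ρ) :
    ∑ τ ∈ rankings n B with τ.erase a = ρ, X τ = marg (B.erase a) X ρ := by
  rw [marg_apply_of_memL hX hρ, sum_filter]
  refine sum_congr rfl fun τ hτ =>
    if_congr ⟨fun h => h ▸ List.erase_sublist, fun hsub => ?_⟩ rfl rfl
  have hτ := mem_rankings.1 hτ
  have hsub' : ρ <+ τ.erase a := by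
    simpa [List.erase_of_not_mem (hρ.notMem (B.notMem_erase a))] using hsub.erase a
  exact (hsub'.eq_of_length (by rw [hρ.length_eq, (hτ.erase a).length_eq])).symm

theorem sum_rankings_erase_infix_eq_zero (hX : MemH B X) {a : Fin n} (haB : a ∈ B)
    (hB : 2 ≤ B.card) (hBA : B.erase a ⊆ A) {π : Word n} (hπ : IsRanking A π) :
    ∑ τ ∈ rankings n B, (if τ.erase a <:+: π then X τ else 0) = 0 := by
  obtain ⟨hXL, hXmarg, hXsum⟩ := hX
  obtain h2 | h1 : 2 ≤ (B.erase a).card ∨ (B.erase a).card = 1 := by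
    rw [card_erase_of_mem haB]
    omega
  · rw [← sum_fiberwise_of_maps_to fun τ hτ => mem_rankings.2 ((mem_rankings.1 hτ).erase a)]
    refine sum_eq_zero fun ρ hρ => ?_
    have hfiber : ∑ τ ∈ rankings n B with τ.erase a = ρ, (if τ.erase a <:+: π then X τ else 0)
        = if ρ <:+: π then marg (B.erase a) X ρ else 0 := by
      rw [← sum_rankings_erase_eq_marg hXL (mem_rankings.1 hρ)]
      split_ifs with hρπ
      · exact sum_congr rfl fun τ hτ => by rw [(mem_filter.1 hτ).2, if_pos hρπ]
      · exact sum_eq_zero fun τ hτ => by rw [(mem_filter.1 hτ).2, if_neg hρπ]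
    rw [hfiber, hXmarg _ (erase_ssubset haB) h2, Pi.zero_apply, ite_self]
  · obtain ⟨b, hb⟩ := card_eq_one.1 h1
    have hinfix : ∀ τ ∈ rankings n B, τ.erase a <:+: π := fun τ hτ => by
      have hτ := (mem_rankings.1 hτ).erase a
      rw [hb, isRanking_singleton_iff] at hτ
      rw [hτ, List.singleton_infix_iff, ← List.mem_toFinset, hπ.2]
      exact hBA (hb ▸ mem_singleton_self b)
    rw [sum_congr rfl fun τ hτ => if_pos (hinfix τ hτ)]
    exact hXsum hB

theorem marg_synth_insert_of_mem {a : Fin n} (ha : a ∉ A) (hX : MemH B X) (haB : a ∈ B)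
    (hB : 2 ≤ B.card) (hBA : B ⊆ insert a A) : marg A (synth (insert a A) X) = 0 := by
  refine (memL_marg A _).ext (fun _ h => absurd rfl h) fun π hπ => ?_
  have hcount : ∀ τ ∈ rankings n B,
      #{j ∈ range (π.length + 1) | τ <:+: π.insertIdx j a}
        * (X τ / ((insert a A).card - B.card + 1)!)
      = (if τ.erase a <:+: π then X τ else 0) / ((insert a A).card - B.card + 1)! := by
    intro τ hτ
    have hτ := mem_rankings.1 hτ
    have hτa : τ.erase a ≠ [] := (hτ.erase a).ne_nil (by
      rw [← card_pos, card_erase_of_mem haB]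
      omega)
    rw [card_filter_infix_insertIdx_of_mem hπ.1 (hπ.notMem ha) hτ.1
      (List.mem_toFinset.1 (hτ.2 ▸ haB)) hτa]
    split_ifs <;> simp
  rw [marg_synth_insert_apply_of_nonempty ha ⟨a, haB⟩ hX.1 hπ, sum_congr rfl hcount, ← sum_div,
    sum_rankings_erase_infix_eq_zero hX haB hB (subset_insert_iff.1 hBA) hπ, zero_div,
    Pi.zero_apply]

end Synthesis

section Decomposition

variable {n : ℕ} {A : Finset (Fin n)}

theorem Pbar_mono {A' : Finset (Fin n)} (h : A' ⊆ A) : Pbar A' ⊆ Pbar A :=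
  filter_subset_filter _ (powerset_mono.2 h)

theorem Pbar_eq_filter_notMem_insert {a : Fin n} (ha : a ∉ A) :
    Pbar A = {B ∈ Pbar (insert a A) | a ∉ B} := by
  ext B
  simp only [Pbar, mem_filter, mem_powerset]
  grind [subset_insert_iff_of_notMem]

theorem marg_synth_insert {a : Fin n} (ha : a ∉ A) {B : Finset (Fin n)}
    (hB : B ∈ Pbar (insert a A)) {X : Word n → ℝ} (hX : MemH B X) :
    marg A (synth (insert a A) X) = if a ∈ B then 0 else synth A X := by
  obtain ⟨hBA, h2 | rfl⟩ := mem_filter.1 hB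
  · split_ifs with haB
    · exact marg_synth_insert_of_mem ha hX haB h2 (mem_powerset.1 hBA)
    · exact marg_synth_insert_of_notMem ha (card_pos.1 (by omega)) haB hX.1
  · rw [if_neg (notMem_empty a), marg_synth_insert_of_memL_empty ha hX.1]

theorem marg_sum_synth_insert {a : Fin n} (ha : a ∉ A) {X : Finset (Fin n) → Word n → ℝ}
    (hX : ∀ B ∈ Pbar (insert a A), MemH B (X B)) :
    marg A (∑ B ∈ Pbar (insert a A), synth (insert a A) (X B)) = ∑ B ∈ Pbar A, synth A (X B) := by
  rw [marg_sum, sum_congr rfl fun B hB => marg_synth_insert ha hB (hX B hB), sum_ite,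
    sum_const_zero, zero_add, Pbar_eq_filter_notMem_insert ha]

theorem marg_sum_synth {A' : Finset (Fin n)} (hA'A : A' ⊆ A) {X : Finset (Fin n) → Word n → ℝ}
    (hX : ∀ B ∈ Pbar A, MemH B (X B)) :
    marg A' (∑ B ∈ Pbar A, synth A (X B)) = ∑ B ∈ Pbar A', synth A' (X B) := by
  suffices h : ∀ D : Finset (Fin n), Disjoint D A' → (∀ B ∈ Pbar (D ∪ A'), MemH B (X B)) →
      marg A' (∑ B ∈ Pbar (D ∪ A'), synth (D ∪ A') (X B)) = ∑ B ∈ Pbar A', synth A' (X B) by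
    rw [← sdiff_union_of_subset hA'A] at hX ⊢
    exact h _ sdiff_disjoint hX
  intro D
  induction D using Finset.induction_on with
  | empty =>
    intro _ _
    rw [empty_union, marg_eq_self (memL_sum fun B _ => memL_synth A' (X B))]
  | insert a D haD ih =>
    intro hdisj hX
    rw [disjoint_insert_left] at hdisj
    rw [insert_union] at hX ⊢
    rw [← marg_marg subset_union_right (subset_insert a _)
        (memL_sum fun B _ => memL_synth _ (X B)),
      marg_sum_synth_insert (by simp [haD, hdisj.1]) hX]
    exact ih hdisj.2 fun B hB => hX B (Pbar_mono (subset_insert a _) hB)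

end Decomposition

theorem marginal_from_decomposition_general {n : ℕ}
    (A : Finset (Fin n))
    (F : Word n → ℝ)
    (X : Finset (Fin n) → Word n → ℝ)
    (hX : ∀ B ∈ Pbar A, MemH B (X B))
    (hdec : F = ∑ B ∈ Pbar A, synth A (X B))
    (A' : Finset (Fin n)) (hA'A : A' ⊆ A) :
    marg A' F = ∑ B ∈ Pbar A', synth A' (X B) := by
  subst hdec
  exact marg_sum_synth hA'A hX

/-- **Marginals from the MRA decomposition.**
If `F ∈ L(Γ(A))` decomposes as `F = Σ_{B ∈ P̄(A)} φ_A X_B` with `X_B ∈ H_B`, then for every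
`A' ⊆ A` with `|A'| ≥ 2` one has `M_{A'} F = Σ_{B ∈ P̄(A')} φ_{A'} X_B`. -/
theorem marginal_from_decomposition {n : ℕ} (hn : 2 ≤ n)
    (A : Finset (Fin n)) (hA : 2 ≤ A.card)
    (F : Word n → ℝ) (hF : MemL A F)
    (X : Finset (Fin n) → Word n → ℝ)
    (hX : ∀ B ∈ Pbar A, MemH B (X B))
    (hdec : F = ∑ B ∈ Pbar A, synth A (X B))
    (A' : Finset (Fin n)) (hA'A : A' ⊆ A) (hA' : 2 ≤ A'.card) :
    marg A' F = ∑ B ∈ Pbar A', synth A' (X B) :=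
  marginal_from_decomposition_general A F X hX hdec A' hA'A
end

section
/- Injectivity of the synthesis operator on localization spaces: for every A ⊆ [n] with |A| ≥ 2 and every B ∈ P̄(A), the restriction of φ_A to H_B is injective, i.e. if F ∈ H_B and φ_A F = 0 then F = 0. -/
open Finset
open scoped List

/-!
Given `π₀ ∈ Γ(B)`, complete it to `σ = π₀ ++ (A \ B)` in `Γ(A)`. Any `π ∈ Γ(B)` occurring in
`σ` is a subword of the restriction `σ|_B = π₀` of the same length, so `π = π₀`. Hence
`φ_A F (σ)` is a nonzero multiple of `F π₀`, and `φ_A F = 0` forces `F π₀ = 0`.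
-/

section

variable {n : ℕ} {A B : Finset (Fin n)} {F : Word n → ℝ} {π π₀ σ : Word n}

lemma mem_allWords_of_nodup (h : σ.Nodup) : σ ∈ allWords n := by
  refine Finset.mem_biUnion.mpr ⟨σ.toFinset, Finset.mem_univ _, ?_⟩
  simp only [rankings, List.mem_toFinset, List.mem_permutations]
  exact List.perm_of_nodup_nodup_toFinset_eq h (Finset.nodup_toList _) (by simp)

namespace IsRanking

lemma length_eq_s3 (h : IsRanking B π) : π.length = B.card := by
  rw [← h.2, List.toFinset_card_of_nodup h.1]

lemma mem_of_mem (h : IsRanking B π) {a : Fin n} (ha : a ∈ π) : a ∈ B :=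
  h.2 ▸ List.mem_toFinset.mpr ha

lemma restrictWord_self (h : IsRanking B π) : restrictWord π B = π :=
  List.filter_eq_self.mpr fun _ ha => decide_eq_true (h.mem_of_mem ha)

lemma eq_nil_of_empty (h : IsRanking ∅ π) : π = [] :=
  List.toFinset_eq_empty_iff π |>.mp h.2

lemma ne_nil_of_nonempty (h : IsRanking B π) (hB : B.Nonempty) : π ≠ [] := by
  rintro rfl
  exact hB.ne_empty h.2.symm

lemma eq_of_sublist (hπ : IsRanking B π) (hπ₀ : IsRanking B π₀) (hsub : π <+ σ)
    (hσ : restrictWord σ B = π₀) : π = π₀ := by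
  have hsub₀ : π <+ π₀ := by
    rw [← hσ, ← hπ.restrictWord_self]
    exact hsub.filter _
  exact hsub₀.eq_of_length (by rw [hπ.length_eq_s3, hπ₀.length_eq_s3])

lemma append_toList_sdiff (h : IsRanking B π) (hBA : B ⊆ A) :
    IsRanking A (π ++ (A \ B).toList) := by
  refine ⟨List.nodup_append.mpr ⟨h.1, Finset.nodup_toList _, ?_⟩, ?_⟩
  · rintro a ha _ hb rfl
    exact (Finset.mem_sdiff.mp (Finset.mem_toList.mp hb)).2 (h.mem_of_mem ha)
  · rw [List.toFinset_append, h.2, Finset.toList_toFinset, Finset.union_sdiff_of_subset hBA]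

lemma restrictWord_append_toList_sdiff (h : IsRanking B π) :
    restrictWord (π ++ (A \ B).toList) B = π := by
  rw [restrictWord, List.filter_append, ← restrictWord, h.restrictWord_self,
    List.filter_eq_nil_iff.mpr, List.append_nil]
  intro a ha
  simpa using (Finset.mem_sdiff.mp (Finset.mem_toList.mp ha)).2

end IsRanking

namespace MemL

lemma apply_eq_zero_of_not_isRanking (hF : MemL B F) (hπ : ¬ IsRanking B π) : F π = 0 :=
  not_imp_comm.mp (hF π) hπ

lemma apply_nil_eq_zero (hF : MemL B F) (hB : B.Nonempty) : F [] = 0 :=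
  hF.apply_eq_zero_of_not_isRanking fun h => h.ne_nil_of_nonempty hB rfl

end MemL

lemma synth_apply_of_memL_empty_s3 (hF : MemL ∅ F) (hσ : IsRanking A σ) :
    synth A F σ = F [] / (A.card.factorial : ℝ) := by
  rw [synth, if_pos hσ, add_eq_left]
  refine Finset.sum_eq_zero fun π _ => ite_eq_right_iff.mpr fun hπ => ?_
  rw [hF.apply_eq_zero_of_not_isRanking fun h => hπ.1 h.eq_nil_of_empty, zero_div]

lemma synth_apply_of_memL (hF : MemL B F) (hB : B.Nonempty) (hσ : IsRanking A σ)
    (hπ₀ : IsRanking B π₀) (hσπ₀ : restrictWord σ B = π₀) (hinfix : π₀ <:+: σ) :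
    synth A F σ = F π₀ / ((A.card - B.card + 1).factorial : ℝ) := by
  rw [synth, if_pos hσ, hF.apply_nil_eq_zero hB, zero_div, zero_add,
    Finset.sum_eq_single_of_mem π₀ (mem_allWords_of_nodup hπ₀.1),
    if_pos ⟨hπ₀.ne_nil_of_nonempty hB, hinfix⟩, hπ₀.length_eq_s3]
  intro π _ hne
  refine ite_eq_right_iff.mpr fun hπ => ?_
  by_cases hπB : IsRanking B π
  · exact absurd (hπB.eq_of_sublist hπ₀ hπ.2.sublist hσπ₀) hne
  · rw [hF.apply_eq_zero_of_not_isRanking hπB, zero_div]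

end

theorem synth_injective_on_H_general {n : ℕ}
    (A : Finset (Fin n))
    (B : Finset (Fin n)) (hB : B ∈ Pbar A)
    (F : Word n → ℝ) (hF : MemH B F) (h : synth A F = 0) :
    F = 0 := by
  have hBA : B ⊆ A := Finset.mem_powerset.mp (Finset.mem_filter.mp hB).1
  funext π₀
  by_cases hπ₀ : IsRanking B π₀
  swap
  · exact hF.1.apply_eq_zero_of_not_isRanking hπ₀
  set σ := π₀ ++ (A \ B).toList
  have hσ : synth A F σ = 0 := congrFun h σ
  rcases B.eq_empty_or_nonempty with rfl | hBne
  · rw [synth_apply_of_memL_empty_s3 hF.1 (hπ₀.append_toList_sdiff hBA)] at hσ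
    rw [hπ₀.eq_nil_of_empty]
    simpa [Nat.factorial_ne_zero] using hσ
  · rw [synth_apply_of_memL hF.1 hBne (hπ₀.append_toList_sdiff hBA) hπ₀
      hπ₀.restrictWord_append_toList_sdiff (List.prefix_append π₀ _).isInfix] at hσ
    simpa [Nat.factorial_ne_zero] using hσ

/-- **Injectivity of the synthesis operator on localization spaces.**
For `A ⊆ [n]` with `|A| ≥ 2` and `B ∈ P̄(A)`, the restriction of `φ_A` to `H_B` is injective. -/
theorem synth_injective_on_H {n : ℕ} (hn : 2 ≤ n)
    (A : Finset (Fin n)) (hA : 2 ≤ A.card)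
    (B : Finset (Fin n)) (hB : B ∈ Pbar A)
    (F : Word n → ℝ) (hF : MemH B F) (h : synth A F = 0) :
    F = 0 :=
  synth_injective_on_H_general A B hB F hF h
end
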